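/- With the linear control system X' = A(t)X + B(t)U(t), X(t₀)=0, the endpoint map Υ(U) = X_U(t₁) is surjective onto ℝⁿ if and only if the only covector ρ₁ ∈ ℝⁿ whose adjoint solution ρ(t) (ρ' = −Aᵀρ, ρ(t₁)=ρ₁) satisfies Bᵀρ ≡ 0 on [t₀,t₁] is ρ₁ = 0. -/

import Mathlib

/-!
Both directions rest on the identity `d/dt ⟨ρ, X⟩ = ⟨Bᵀρ, U⟩` for a solution `ρ` of the adjoint
equation and a trajectory `X` driven by `U`. If `Bᵀρ ≡ 0`, then `ρ(t₁)` is orthogonal to every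
reachable endpoint, so surjectivity forces `ρ(t₁) = 0`. Conversely, if `ρ(t₁)` is orthogonal to the
reachable subspace, steering with `U = Bᵀρ` makes `⟨ρ, X⟩` nondecreasing with derivative `|Bᵀρ|²`
and equal to `0` at both ends, so `Bᵀρ ≡ 0` and normality gives `ρ(t₁) = 0`; hence the reachable
subspace is everything.
-/

open Set Matrix

open scoped NNReal

section Clamp

variable {ι : Type*} [Fintype ι]

/-- The nearest-point retraction onto the sup-norm ball of radius `G`. -/
noncomputable def clampVec (G : ℝ) (x : ι → ℝ) : ι → ℝ := fun i => max (-G) (min G (x i))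

lemma lipschitzWith_clampVec (G : ℝ) : LipschitzWith 1 (clampVec (ι := ι) G) := by
  refine LipschitzWith.of_dist_le_mul fun x y => (dist_pi_le_iff (by positivity)).2 fun i => ?_
  calc dist (clampVec G x i) (clampVec G y i) ≤ 1 * dist (x i) (y i) :=
        ((LipschitzWith.id.const_min G).const_max (-G)).dist_le_mul (x i) (y i)
    _ ≤ 1 * dist x y := by gcongr; exact dist_le_pi_dist x y i

lemma norm_clampVec_le {G : ℝ} (hG : 0 ≤ G) (x : ι → ℝ) : ‖clampVec G x‖ ≤ G :=
  (pi_norm_le_iff_of_nonneg hG).2 fun i => abs_le.2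
    ⟨le_max_left _ _, max_le (by linarith) (min_le_left _ _)⟩

lemma norm_clampVec_le_norm {G : ℝ} (hG : 0 ≤ G) (x : ι → ℝ) : ‖clampVec G x‖ ≤ ‖x‖ := by
  refine (pi_norm_le_iff_of_nonneg (norm_nonneg x)).2 fun i => ?_
  have hxi : |x i| ≤ ‖x‖ := norm_le_pi_norm x i
  have hxi₀ := abs_nonneg (x i)
  refine (Real.norm_eq_abs _).trans_le (le_trans (abs_le.2 ⟨?_, ?_⟩) hxi)
  · exact le_max_of_le_right (le_min (by linarith) (neg_abs_le _))
  · exact max_le (by linarith) ((min_le_right _ _).trans (le_abs_self _))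

lemma clampVec_eq_self {G : ℝ} {x : ι → ℝ} (h : ‖x‖ ≤ G) : clampVec G x = x := by
  funext i
  obtain ⟨h₁, h₂⟩ := abs_le.1 ((norm_le_pi_norm x i).trans h)
  simp only [clampVec, min_eq_right h₂, max_eq_right h₁]

end Clamp

section GlobalExistence

variable {ι : Type*} [Fintype ι] {a b : ℝ} {v : ℝ → (ι → ℝ) → ι → ℝ} {K : ℝ≥0}

/- Picard–Lindelöf applied to the field clamped to a ball of Grönwall radius; the Grönwall
bound then shows that the solution never leaves that ball, so the clamp is inactive. -/
theorem exists_eq_forall_mem_Icc_hasDerivWithinAt_of_lipschitzWith (hab : a ≤ b)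
    (hv : ∀ t ∈ Icc a b, LipschitzWith K (v t)) (hvc : ∀ x, ContinuousOn (v · x) (Icc a b))
    (x₀ : ι → ℝ) :
    ∃ g : ℝ → ι → ℝ, g a = x₀ ∧ ∀ t ∈ Icc a b, HasDerivWithinAt g (v t (g t)) (Icc a b) t := by
  obtain ⟨F, hF⟩ := isCompact_Icc.exists_bound_of_continuousOn (hvc 0)
  have hF₀ : 0 ≤ F := (norm_nonneg _).trans (hF a (left_mem_Icc.2 hab))
  have hgrowth : ∀ t ∈ Icc a b, ∀ x, ‖v t x‖ ≤ K * ‖x‖ + F := fun t ht x => by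
    have := (hv t ht).norm_sub_le x 0
    rw [sub_zero] at this
    linarith [norm_le_insert' (v t x) (v t 0), hF t ht]
  have hmono := gronwallBound_mono (norm_nonneg x₀) hF₀ K.coe_nonneg
  set G := gronwallBound ‖x₀‖ K F (b - a)
  have hG : 0 ≤ G := (norm_nonneg x₀).trans <| (gronwallBound_x0 ‖x₀‖ K F).symm.trans_le
    (hmono (sub_nonneg.2 hab))
  let L : ℝ≥0 := ⟨K * G + F, by positivity⟩
  have hpl : IsPicardLindelof (fun t x => v t (clampVec G x)) ⟨a, left_mem_Icc.2 hab⟩ x₀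
      ⟨L * (b - a), mul_nonneg L.coe_nonneg (sub_nonneg.2 hab)⟩ 0 L K :=
    { lipschitzOnWith := fun t ht =>
        (mul_one K ▸ (hv t ht).comp (lipschitzWith_clampVec G)).lipschitzOnWith
      continuousOn := fun x _ => hvc _
      norm_le := fun t ht x _ => (hgrowth t ht _).trans <|
        add_le_add_left (mul_le_mul_of_nonneg_left (norm_clampVec_le hG x) K.coe_nonneg) F
      mul_max_le := by
        show (L : ℝ) * max (b - a) (a - a) ≤ L * (b - a) - 0
        rw [sub_self, max_eq_left (sub_nonneg.2 hab), sub_zero] }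
  obtain ⟨g, hg₀, hg⟩ := hpl.exists_eq_forall_mem_Icc_hasDerivWithinAt₀
  have hgG : ∀ t ∈ Icc a b, ‖g t‖ ≤ G := fun t ht => by
    refine (norm_le_gronwallBound_of_norm_deriv_right_le (HasDerivWithinAt.continuousOn hg)
      (fun t ht => (hg t (Ico_subset_Icc_self ht)).mono_of_mem_nhdsWithin
        (Icc_mem_nhdsGE_of_mem ht)) (congrArg norm hg₀).le (fun t ht => ?_) t ht).trans
      (hmono (by linarith [ht.2]))
    exact (hgrowth t (Ico_subset_Icc_self ht) _).trans (by gcongr; exact norm_clampVec_le_norm hG _)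
  refine ⟨g, hg₀, fun t ht => ?_⟩
  simpa only [clampVec_eq_self (hgG t ht)] using hg t ht

theorem exists_eq_right_forall_mem_Icc_hasDerivWithinAt_of_lipschitzWith (hab : a ≤ b)
    (hv : ∀ t ∈ Icc a b, LipschitzWith K (v t)) (hvc : ∀ x, ContinuousOn (v · x) (Icc a b))
    (x₁ : ι → ℝ) :
    ∃ g : ℝ → ι → ℝ, g b = x₁ ∧ ∀ t ∈ Icc a b, HasDerivWithinAt g (v t (g t)) (Icc a b) t := by
  have hrefl : MapsTo (fun t => a + b - t) (Icc a b) (Icc a b) := fun t ht =>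
    ⟨by linarith [ht.2], by linarith [ht.1]⟩
  obtain ⟨σ, hσ₀, hσ⟩ := exists_eq_forall_mem_Icc_hasDerivWithinAt_of_lipschitzWith
    (v := fun s x => -v (a + b - s) x) hab (fun t ht => (hv _ (hrefl ht)).neg)
    (fun x => ((hvc x).comp (by fun_prop) hrefl).neg) x₁
  refine ⟨fun t => σ (a + b - t), by simpa using hσ₀, fun t ht => ?_⟩
  have hflip : HasDerivWithinAt (fun s => a + b - s) (-1) (Icc a b) t := by
    simpa using (hasDerivWithinAt_id t (Icc a b)).const_sub (a + b)
  have := (hσ _ (hrefl ht)).scomp t hflip hrefl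
  simpa [Function.comp_def] using this

end GlobalExistence

lemma ContinuousOn.matrix_mulVec {X m n R : Type*} [TopologicalSpace X] [TopologicalSpace R]
    [NonUnitalNonAssocSemiring R] [ContinuousAdd R] [ContinuousMul R] [Fintype n] {s : Set X}
    {M : X → Matrix m n R} {u : X → n → R} (hM : ContinuousOn M s) (hu : ContinuousOn u s) :
    ContinuousOn (fun x => M x *ᵥ u x) s :=
  (continuous_fst.matrix_mulVec continuous_snd).comp_continuousOn (hM.prodMk hu)

section LinearODE

variable {ι κ : Type*} [Fintype ι] [Fintype κ] {a b : ℝ}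

lemma exists_lipschitzWith_mulVec_add {X : Type*} [TopologicalSpace X] {s : Set X}
    (hs : IsCompact s) {M : X → Matrix ι κ ℝ} (hM : ContinuousOn M s) :
    ∃ K : ℝ≥0, ∀ t ∈ s, ∀ y : ι → ℝ, LipschitzWith K fun x => M t *ᵥ x + y := by
  let _ : NormedAddCommGroup (Matrix ι κ ℝ) := Matrix.linftyOpNormedAddCommGroup
  obtain ⟨C, hC⟩ := hs.exists_bound_of_continuousOn hM
  refine ⟨C.toNNReal, fun t ht y => LipschitzWith.of_dist_le_mul fun x x' => ?_⟩
  rw [dist_eq_norm, dist_eq_norm, add_sub_add_right_eq_sub, ← mulVec_sub]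
  exact (linfty_opNorm_mulVec _ _).trans <| by gcongr; exact (hC t ht).trans C.le_coe_toNNReal

variable {M : ℝ → Matrix ι ι ℝ} {f : ℝ → ι → ℝ}

theorem exists_eq_forall_mem_Icc_hasDerivWithinAt_mulVec_add (hab : a ≤ b)
    (hM : ContinuousOn M (Icc a b)) (hf : ContinuousOn f (Icc a b)) (x₀ : ι → ℝ) :
    ∃ g : ℝ → ι → ℝ, g a = x₀ ∧
      ∀ t ∈ Icc a b, HasDerivWithinAt g (M t *ᵥ g t + f t) (Icc a b) t := by
  obtain ⟨K, hK⟩ := exists_lipschitzWith_mulVec_add isCompact_Icc hM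
  exact exists_eq_forall_mem_Icc_hasDerivWithinAt_of_lipschitzWith hab (fun t ht => hK t ht _)
    (fun x => (hM.matrix_mulVec continuousOn_const).add hf) x₀

theorem exists_eq_right_forall_mem_Icc_hasDerivWithinAt_mulVec (hab : a ≤ b)
    (hM : ContinuousOn M (Icc a b)) (x₁ : ι → ℝ) :
    ∃ g : ℝ → ι → ℝ, g b = x₁ ∧ ∀ t ∈ Icc a b, HasDerivWithinAt g (M t *ᵥ g t) (Icc a b) t := by
  obtain ⟨K, hK⟩ := exists_lipschitzWith_mulVec_add isCompact_Icc hM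
  simpa using exists_eq_right_forall_mem_Icc_hasDerivWithinAt_of_lipschitzWith hab
    (fun t ht => hK t ht 0) (fun x => (hM.matrix_mulVec continuousOn_const).add continuousOn_const) x₁

end LinearODE

theorem HasDerivWithinAt.dotProduct {𝕜 ι : Type*} [NontriviallyNormedField 𝕜] [Fintype ι]
    {u v : 𝕜 → ι → 𝕜} {u' v' : ι → 𝕜} {s : Set 𝕜} {x : 𝕜}
    (hu : HasDerivWithinAt u u' s x) (hv : HasDerivWithinAt v v' s x) :
    HasDerivWithinAt (fun y => u y ⬝ᵥ v y) (u' ⬝ᵥ v x + u x ⬝ᵥ v') s x := by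
  simp only [_root_.dotProduct, ← Finset.sum_add_distrib]
  exact HasDerivWithinAt.fun_sum fun i _ =>
    (hasDerivWithinAt_pi.1 hu i).mul (hasDerivWithinAt_pi.1 hv i)

theorem eq_zero_of_hasDerivWithinAt_nonneg_of_eq {f f' : ℝ → ℝ} {a b : ℝ} (hab : a < b)
    (hf : ∀ t ∈ Icc a b, HasDerivWithinAt f (f' t) (Icc a b) t)
    (hf' : ∀ t ∈ Icc a b, 0 ≤ f' t) (hfab : f a = f b) :
    ∀ t ∈ Icc a b, f' t = 0 := by
  have hmono : MonotoneOn f (Icc a b) :=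
    monotoneOn_of_hasDerivWithinAt_nonneg (convex_Icc a b) (HasDerivWithinAt.continuousOn hf)
      (fun t ht => (hf t (interior_subset ht)).mono interior_subset)
      (fun t ht => hf' t (interior_subset ht))
  have hconst : ∀ t ∈ Icc a b, f t = f a := fun t ht =>
    le_antisymm (hfab ▸ hmono ht (right_mem_Icc.2 hab.le) ht.2)
      (hmono (left_mem_Icc.2 hab.le) ht ht.1)
  intro t ht
  exact (uniqueDiffOn_Icc hab t ht).eq_deriv _ (hf t ht)
    ((hasDerivWithinAt_const t _ (f a)).congr_of_mem hconst ht)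

theorem Submodule.eq_top_of_forall_dotProduct_eq_zero {K ι : Type*} [Field K] [Fintype ι]
    {V : Submodule K (ι → K)} (hV : ∀ w, (∀ x ∈ V, x ⬝ᵥ w = 0) → w = 0) : V = ⊤ := by
  classical
  by_contra hne
  obtain ⟨φ, hφ, hVφ⟩ := V.exists_le_ker_of_lt_top (lt_top_iff_ne_top.2 hne)
  have hφw : ∀ x, φ x = x ⬝ᵥ fun i => φ fun j => if i = j then 1 else 0 := fun x => by
    simp only [φ.pi_apply_eq_sum_univ x, smul_eq_mul, dotProduct]
  have hw := hV _ fun x hx => (hφw x).symm.trans (hVφ hx)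
  exact hφ (LinearMap.ext fun x => by rw [hφw, hw, dotProduct_zero, LinearMap.zero_apply])

section LinearControl

variable {ι κ : Type*} [Fintype ι] [Fintype κ]

/-- The range of the endpoint map `U ↦ X_U(t₁)` (the paper's `Υ`) over continuous controls. -/
def reachableSubspace (A : ℝ → Matrix ι ι ℝ) (B : ℝ → Matrix ι κ ℝ) (t₀ t₁ : ℝ) :
    Submodule ℝ (ι → ℝ) where
  carrier := {v | ∃ U : ℝ → κ → ℝ, ContinuousOn U (Icc t₀ t₁) ∧ ∃ X : ℝ → ι → ℝ,
    (∀ t ∈ Icc t₀ t₁, HasDerivWithinAt X (A t *ᵥ X t + B t *ᵥ U t) (Icc t₀ t₁) t) ∧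
    X t₀ = 0 ∧ X t₁ = v}
  zero_mem' := ⟨0, continuousOn_const, 0, fun t _ =>
    (hasDerivWithinAt_const t _ (0 : ι → ℝ)).congr_deriv (by simp), rfl, rfl⟩
  add_mem' := by
    rintro _ _ ⟨U, hU, X, hX, hX₀, rfl⟩ ⟨V, hV, Y, hY, hY₀, rfl⟩
    refine ⟨U + V, hU.add hV, X + Y, fun t ht => ?_, by simp [hX₀, hY₀], rfl⟩
    refine ((hX t ht).add (hY t ht)).congr_deriv ?_
    simp only [Pi.add_apply, mulVec_add]
    abel
  smul_mem' := by
    rintro c _ ⟨U, hU, X, hX, hX₀, rfl⟩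
    refine ⟨c • U, hU.const_smul c, c • X, fun t ht => ?_, by simp [hX₀], rfl⟩
    refine ((hX t ht).const_smul c).congr_deriv ?_
    simp only [Pi.smul_apply, mulVec_smul, smul_add]

variable {A : Matrix ι ι ℝ} {B : Matrix ι κ ℝ} {ρ X : ℝ → ι → ℝ} {u : κ → ℝ} {s : Set ℝ} {t : ℝ}

theorem HasDerivWithinAt.dotProduct_of_adjoint
    (hρ : HasDerivWithinAt ρ (-(Aᵀ *ᵥ ρ t)) s t) (hX : HasDerivWithinAt X (A *ᵥ X t + B *ᵥ u) s t) :
    HasDerivWithinAt (fun τ => ρ τ ⬝ᵥ X τ) (Bᵀ *ᵥ ρ t ⬝ᵥ u) s t := by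
  refine (hρ.dotProduct hX).congr_deriv ?_
  simp only [dotProduct_add, neg_dotProduct, mulVec_transpose, dotProduct_mulVec]
  ring

end LinearControl

section Normality

variable {ι κ : Type*} [Fintype ι] [Fintype κ] {A : ℝ → Matrix ι ι ℝ} {B : ℝ → Matrix ι κ ℝ}
  {t₀ t₁ : ℝ} {ρ : ℝ → ι → ℝ}

theorem dotProduct_eq_zero_of_mem_reachableSubspace (ht : t₀ ≤ t₁)
    (hρ : ∀ t ∈ Icc t₀ t₁, HasDerivWithinAt ρ (-((A t)ᵀ *ᵥ ρ t)) (Icc t₀ t₁) t)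
    (hBρ : ∀ t ∈ Icc t₀ t₁, (B t)ᵀ *ᵥ ρ t = 0) {v : ι → ℝ}
    (hv : v ∈ reachableSubspace A B t₀ t₁) : ρ t₁ ⬝ᵥ v = 0 := by
  obtain ⟨U, -, X, hX, hX₀, rfl⟩ := hv
  have hd : ∀ t ∈ Icc t₀ t₁, HasDerivWithinAt (fun τ => ρ τ ⬝ᵥ X τ) 0 (Icc t₀ t₁) t :=
    fun t ht' => by simpa [hBρ t ht'] using (hρ t ht').dotProduct_of_adjoint (hX t ht')
  have hconst := constant_of_has_deriv_right_zero (HasDerivWithinAt.continuousOn hd)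
    (fun t ht' => (hd t (Ico_subset_Icc_self ht')).mono_of_mem_nhdsWithin
      (Icc_mem_nhdsGE_of_mem ht')) t₁ ⟨ht, le_rfl⟩
  simpa [hX₀] using hconst

theorem mulVec_transpose_eq_zero_of_forall_mem_reachableSubspace (ht : t₀ < t₁)
    (hA : ContinuousOn A (Icc t₀ t₁)) (hB : ContinuousOn B (Icc t₀ t₁))
    (hρ : ∀ t ∈ Icc t₀ t₁, HasDerivWithinAt ρ (-((A t)ᵀ *ᵥ ρ t)) (Icc t₀ t₁) t)
    (hρ₁ : ∀ v ∈ reachableSubspace A B t₀ t₁, v ⬝ᵥ ρ t₁ = 0) :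
    ∀ t ∈ Icc t₀ t₁, (B t)ᵀ *ᵥ ρ t = 0 := by
  set U := fun t => (B t)ᵀ *ᵥ ρ t
  have hU : ContinuousOn U (Icc t₀ t₁) :=
    (continuous_id.matrix_transpose.comp_continuousOn hB).matrix_mulVec
      (HasDerivWithinAt.continuousOn hρ)
  obtain ⟨X, hX₀, hX⟩ :=
    exists_eq_forall_mem_Icc_hasDerivWithinAt_mulVec_add ht.le hA (hB.matrix_mulVec hU) 0
  have hX₁ : X t₁ ⬝ᵥ ρ t₁ = 0 := hρ₁ _ ⟨U, hU, X, hX, hX₀, rfl⟩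
  have hUU := eq_zero_of_hasDerivWithinAt_nonneg_of_eq ht
    (fun t ht' => (hρ t ht').dotProduct_of_adjoint (hX t ht'))
    (fun t _ => Fintype.sum_nonneg fun i => mul_self_nonneg (U t i))
    (by rw [hX₀, dotProduct_zero, dotProduct_comm, hX₁])
  exact fun t ht' => dotProduct_self_eq_zero.1 (hUU t ht')

end Normality

/-- Normality criterion (Sec. 2.7): the endpoint map `U ↦ X_U(t₁)` of the linear
control system `X' = A(t)X + B(t)U(t)`, `X(t₀) = 0`, is surjective onto `ℝⁿ` iff
the only solution of the adjoint equation `ρ' = -A(t)ᵀρ` with `B(t)ᵀρ(t) ≡ 0` on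
`[t₀,t₁]` has `ρ(t₁) = 0`. -/
theorem stmt_7 (n r : ℕ) (t₀ t₁ : ℝ) (ht : t₀ < t₁)
    (A : ℝ → Matrix (Fin n) (Fin n) ℝ) (B : ℝ → Matrix (Fin n) (Fin r) ℝ)
    (hA : ContinuousOn A (Icc t₀ t₁)) (hB : ContinuousOn B (Icc t₀ t₁)) :
    (∀ v : Fin n → ℝ, ∃ U : ℝ → Fin r → ℝ, ContinuousOn U (Icc t₀ t₁) ∧
      ∃ X : ℝ → Fin n → ℝ,
        (∀ t ∈ Icc t₀ t₁,
          HasDerivWithinAt X ((A t).mulVec (X t) + (B t).mulVec (U t)) (Icc t₀ t₁) t) ∧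
        X t₀ = 0 ∧ X t₁ = v) ↔
    (∀ ρ : ℝ → Fin n → ℝ,
      (∀ t ∈ Icc t₀ t₁,
        HasDerivWithinAt ρ (-((A t)ᵀ.mulVec (ρ t))) (Icc t₀ t₁) t) →
      (∀ t ∈ Icc t₀ t₁, (B t)ᵀ.mulVec (ρ t) = 0) → ρ t₁ = 0) := by
  constructor
  · intro hsurj ρ hρ hBρ
    exact dotProduct_self_eq_zero.1
      (dotProduct_eq_zero_of_mem_reachableSubspace ht.le hρ hBρ (hsurj (ρ t₁)))
  · intro hnormal
    have htop : reachableSubspace A B t₀ t₁ = ⊤ :=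
      Submodule.eq_top_of_forall_dotProduct_eq_zero fun w hw => by
        obtain ⟨ρ, rfl, hρ⟩ := exists_eq_right_forall_mem_Icc_hasDerivWithinAt_mulVec ht.le
          (continuous_id.matrix_transpose.comp_continuousOn hA).neg w
        simp only [Pi.neg_apply, neg_mulVec] at hρ
        exact hnormal ρ hρ (mulVec_transpose_eq_zero_of_forall_mem_reachableSubspace ht hA hB hρ hw)
    exact Submodule.eq_top_iff'.1 htop
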